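/- arXiv:2211.02271 — 2 statements merged into one kernel-verified Lean document; each statement's English description precedes it below -/
import Mathlib

section
/- Let {w^k} be a sequence generated by the projected gradient iteration w^{k+1} ∈ P_{A_s}(w^k − λ∇f(w^k)) with w^0 ∈ A_s. Then every accumulation point w* of {w^k} satisfies w* ∈ P_{A_s}(w* − λ∇f(w*)), i.e. w* is a fixed point of the projected gradient map. -/
/-!
Because `λ < 1/L`, the descent lemma, combined with the fact that `w^{k+1}` is at least as close
to `w^k - λ∇f(w^k)` as the competitor `w^k ∈ A_s`, gives the sufficient decrease
`f(w^{k+1}) ≤ f(w^k) - (1 - Lλ)/(2λ) ‖w^{k+1} - w^k‖²`. Since `f` is bounded below on `A_s`, the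
steps `w^{k+1} - w^k` tend to `0`, so along a subsequence `w^{φ k} → w*` also `w^{φ k + 1} → w*`.
The inequalities `‖z_k - w^{φ k + 1}‖ ≤ ‖z_k - x‖` (`x ∈ A_s`, `z_k = w^{φ k} - λ∇f(w^{φ k})`)
then pass to the limit, as `∇f` is continuous and `A_s` is closed.
-/

open Filter Topology

noncomputable section

def spSet (n s : ℕ) : Set (EuclideanSpace ℝ (Fin n)) :=
  {w | (Finset.univ.filter fun i => w i ≠ 0).card ≤ s}

def projSet {n : ℕ} (A : Set (EuclideanSpace ℝ (Fin n))) (z : EuclideanSpace ℝ (Fin n)) :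
    Set (EuclideanSpace ℝ (Fin n)) :=
  {y | y ∈ A ∧ ∀ x ∈ A, ‖z - y‖ ≤ ‖z - x‖}

def coordSub {n : ℕ} (J : Finset (Fin n)) : Set (EuclideanSpace ℝ (Fin n)) :=
  {w | ∀ i ∉ J, w i = 0}

def coordRestrict {n : ℕ} (J : Finset (Fin n)) (v : EuclideanSpace ℝ (Fin n)) :
    EuclideanSpace ℝ (Fin n) :=
  (EuclideanSpace.equiv (Fin n) ℝ).symm (fun i => if i ∈ J then v i else 0)

section GradientStep

open InnerProductSpace
open scoped RealInnerProductSpace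

variable {E : Type*} [NormedAddCommGroup E] [InnerProductSpace ℝ E]

theorem descent_lemma [CompleteSpace E] {f : E → ℝ} {f' : E → E} {L : ℝ}
    (hgrad : ∀ x, HasGradientAt f (f' x) x) (hlip : ∀ x y, ‖f' x - f' y‖ ≤ L * ‖x - y‖)
    (x y : E) : f y ≤ f x + ⟪f' x, y - x⟫ + L / 2 * ‖y - x‖ ^ 2 := by
  set d := y - x
  -- the claim is `g 1 ≤ g 0`, and the Lipschitz bound makes `g` nonincreasing on `[0, 1]`
  set g : ℝ → ℝ := fun t => f (x + t • d) - t * ⟪f' x, d⟫ - L / 2 * ‖d‖ ^ 2 * t ^ 2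
  have hg : ∀ t, HasDerivAt g (⟪f' (x + t • d), d⟫ - ⟪f' x, d⟫ - L * ‖d‖ ^ 2 * t) t := by
    intro t
    have hpath : HasDerivAt (fun t : ℝ => x + t • d) d t := by
      simpa using ((hasDerivAt_id t).smul_const d).const_add x
    have hfpath := (hgrad (x + t • d)).hasFDerivAt.comp_hasDerivAt t hpath
    rw [toDual_apply_apply] at hfpath
    exact ((hfpath.sub ((hasDerivAt_id t).mul_const ⟪f' x, d⟫)).sub
      ((hasDerivAt_pow 2 t).const_mul (L / 2 * ‖d‖ ^ 2))).congr_deriv (by push_cast; ring)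
  have hg_nonpos : ∀ t ∈ interior (Set.Icc (0 : ℝ) 1),
      ⟪f' (x + t • d), d⟫ - ⟪f' x, d⟫ - L * ‖d‖ ^ 2 * t ≤ 0 := by
    intro t ht
    rw [interior_Icc] at ht
    have : ⟪f' (x + t • d) - f' x, d⟫ ≤ L * ‖d‖ ^ 2 * t :=
      calc ⟪f' (x + t • d) - f' x, d⟫ ≤ ‖f' (x + t • d) - f' x‖ * ‖d‖ := real_inner_le_norm _ _
        _ ≤ L * ‖t • d‖ * ‖d‖ := by
          gcongr
          simpa using hlip (x + t • d) x
        _ = L * ‖d‖ ^ 2 * t := by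
          rw [norm_smul, Real.norm_of_nonneg ht.1.le]
          ring
    rw [inner_sub_left] at this
    linarith
  have hanti : AntitoneOn g (Set.Icc 0 1) :=
    antitoneOn_of_hasDerivWithinAt_nonpos (convex_Icc 0 1)
      (fun t _ => (hg t).continuousAt.continuousWithinAt)
      (fun t _ => (hg t).hasDerivWithinAt) hg_nonpos
  have h10 := hanti (by simp) (by simp) zero_le_one
  simp only [g, zero_smul, add_zero, one_smul, add_sub_cancel, d] at h10
  linarith

theorem two_mul_inner_add_sq_nonpos_of_norm_sub_le {lam : ℝ} {g x y : E}
    (h : ‖x - lam • g - y‖ ≤ ‖x - lam • g - x‖) :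
    2 * lam * ⟪g, y - x⟫ + ‖y - x‖ ^ 2 ≤ 0 := by
  have hsq : ‖(y - x) + lam • g‖ ^ 2 ≤ ‖lam • g‖ ^ 2 := by
    rw [show x - lam • g - y = -((y - x) + lam • g) by abel,
      show x - lam • g - x = -(lam • g) by abel, norm_neg, norm_neg] at h
    gcongr
  rw [norm_add_sq_real, real_inner_smul_right, real_inner_comm] at hsq
  linarith

theorem sufficient_decrease [CompleteSpace E] {f : E → ℝ} {f' : E → E} {L lam : ℝ}
    (hgrad : ∀ x, HasGradientAt f (f' x) x) (hlip : ∀ x y, ‖f' x - f' y‖ ≤ L * ‖x - y‖)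
    (hlam : 0 < lam) {x y : E} (h : ‖x - lam • f' x - y‖ ≤ ‖x - lam • f' x - x‖) :
    f y ≤ f x - (1 - L * lam) / (2 * lam) * ‖y - x‖ ^ 2 := by
  have hdesc := descent_lemma hgrad hlip x y
  have hproj := two_mul_inner_add_sq_nonpos_of_norm_sub_le h
  have hscaled : 2 * lam * f y ≤ 2 * lam * f x - (1 - L * lam) * ‖y - x‖ ^ 2 := by nlinarith
  rw [div_mul_eq_mul_div, le_sub_iff_add_le, ← le_sub_iff_add_le', div_le_iff₀ (by positivity)]
  linarith

end GradientStep

theorem summable_of_add_le_of_bddBelow {a b : ℕ → ℝ} (hb : ∀ k, 0 ≤ b k)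
    (hab : ∀ k, a (k + 1) + b k ≤ a k) (ha : BddBelow (Set.range a)) : Summable b := by
  obtain ⟨c, hc⟩ := ha
  have htele : ∀ m, ∑ k ∈ Finset.range m, b k ≤ a 0 - a m := by
    intro m
    induction m with
    | zero => simp
    | succ m ih => rw [Finset.sum_range_succ]; linarith [hab m]
  exact summable_of_sum_range_le (c := a 0 - c) hb fun m =>
    (htele m).trans (by linarith [hc ⟨m, rfl⟩])

theorem tendsto_sub_nhds_zero_of_sufficient_decrease {E : Type*} [SeminormedAddCommGroup E]
    {u : ℕ → E} {a : ℕ → ℝ} {δ : ℝ} (hδ : 0 < δ)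
    (hdecr : ∀ k, a (k + 1) ≤ a k - δ * ‖u (k + 1) - u k‖ ^ 2) (ha : BddBelow (Set.range a)) :
    Tendsto (fun k => u (k + 1) - u k) atTop (𝓝 0) := by
  have hsum : Summable fun k => δ * ‖u (k + 1) - u k‖ ^ 2 :=
    summable_of_add_le_of_bddBelow (fun k => by positivity) (fun k => by linarith [hdecr k]) ha
  have hsq : Tendsto (fun k => ‖u (k + 1) - u k‖ ^ 2) atTop (𝓝 0) := by
    simpa [hδ.ne'] using hsum.tendsto_atTop_zero.const_mul δ⁻¹
  rw [tendsto_zero_iff_norm_tendsto_zero]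
  simpa [Function.comp_def] using (Real.continuous_sqrt.tendsto 0).comp hsq

theorem isClosed_coordSub {n : ℕ} (J : Finset (Fin n)) : IsClosed (coordSub J) := by
  have : coordSub J = ⋂ i ∉ J, {w : EuclideanSpace ℝ (Fin n) | w i = 0} := by
    ext w
    simp [coordSub]
  rw [this]
  exact isClosed_biInter fun i _ => isClosed_eq (by fun_prop) continuous_const

theorem spSet_eq_biUnion_coordSub (n s : ℕ) :
    spSet n s = ⋃ J ∈ {J : Finset (Fin n) | J.card ≤ s}, coordSub J := by
  ext w
  simp only [spSet, coordSub, Set.mem_iUnion, Set.mem_ofPred_eq, exists_prop]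
  constructor
  · intro hw
    exact ⟨_, hw, fun i hi => by simpa using hi⟩
  · rintro ⟨J, hJ, hwJ⟩
    refine (Finset.card_le_card fun i hi => ?_).trans hJ
    by_contra hiJ
    exact (Finset.mem_filter.1 hi).2 (hwJ i hiJ)

theorem isClosed_spSet (n s : ℕ) : IsClosed (spSet n s) := by
  rw [spSet_eq_biUnion_coordSub]
  exact (Set.toFinite _).isClosed_biUnion fun J _ => isClosed_coordSub J

theorem mem_projSet_of_tendsto {n : ℕ} {A : Set (EuclideanSpace ℝ (Fin n))} (hA : IsClosed A)
    {z y : ℕ → EuclideanSpace ℝ (Fin n)} {z₀ y₀ : EuclideanSpace ℝ (Fin n)}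
    (hz : Tendsto z atTop (𝓝 z₀)) (hy : Tendsto y atTop (𝓝 y₀))
    (hproj : ∀ k, y k ∈ projSet A (z k)) : y₀ ∈ projSet A z₀ :=
  ⟨hA.mem_of_tendsto hy (Eventually.of_forall fun k => (hproj k).1), fun x hx =>
    le_of_tendsto_of_tendsto' (hz.sub hy).norm (hz.sub tendsto_const_nhds).norm
      fun k => (hproj k).2 x hx⟩

theorem stmt2_general {n s : ℕ}
    (f : EuclideanSpace ℝ (Fin n) → ℝ)
    (f' : EuclideanSpace ℝ (Fin n) → EuclideanSpace ℝ (Fin n))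
    (L lam : ℝ) (hL : 0 < L)
    (hgrad : ∀ x, HasGradientAt f (f' x) x)
    (hlip : ∀ x y, ‖f' x - f' y‖ ≤ L * ‖x - y‖)
    (hbdd : BddBelow (f '' spSet n s))
    (hlam0 : 0 < lam) (hlamL : lam < 1 / L)
    (w : ℕ → EuclideanSpace ℝ (Fin n))
    (hw0 : w 0 ∈ spSet n s)
    (hiter : ∀ k, w (k + 1) ∈ projSet (spSet n s) (w k - lam • f' (w k)))
    (wstar : EuclideanSpace ℝ (Fin n))
    (haccum : ∃ φ : ℕ → ℕ, StrictMono φ ∧ Tendsto (fun k => w (φ k)) atTop (𝓝 wstar)) :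
    wstar ∈ projSet (spSet n s) (wstar - lam • f' wstar) := by
  obtain ⟨φ, hφ, hwφ⟩ := haccum
  have hmem : ∀ k, w k ∈ spSet n s
    | 0 => hw0
    | k + 1 => (hiter k).1
  have hδ : 0 < (1 - L * lam) / (2 * lam) := by
    rw [lt_div_iff₀ hL] at hlamL
    exact div_pos (by linarith) (by positivity)
  have hstep := tendsto_sub_nhds_zero_of_sufficient_decrease (u := w) (a := fun k => f (w k))
    hδ (fun k => sufficient_decrease hgrad hlip hlam0 ((hiter k).2 (w k) (hmem k)))
    (hbdd.mono (Set.range_subset_iff.2 fun k => Set.mem_image_of_mem f (hmem k)))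
  have hnext : Tendsto (fun k => w (φ k + 1)) atTop (𝓝 wstar) := by
    simpa using hwφ.add (hstep.comp hφ.tendsto_atTop)
  have hf' : Continuous f' :=
    (LipschitzWith.of_dist_le' fun x y => by simpa only [dist_eq_norm] using hlip x y).continuous
  exact mem_projSet_of_tendsto (isClosed_spSet n s)
    (hwφ.sub (((hf'.tendsto wstar).comp hwφ).const_smul lam)) hnext fun k => hiter (φ k)

/-- every accumulation point of the PG iteration is a fixed point of
the projected gradient map. -/
theorem stmt2 {n s : ℕ} (hs1 : 1 ≤ s) (hsn : s ≤ n)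
    (f : EuclideanSpace ℝ (Fin n) → ℝ)
    (f' : EuclideanSpace ℝ (Fin n) → EuclideanSpace ℝ (Fin n))
    (L lam : ℝ) (hL : 0 < L)
    (hconv : ConvexOn ℝ Set.univ f)
    (hgrad : ∀ x, HasGradientAt f (f' x) x)
    (hlip : ∀ x y, ‖f' x - f' y‖ ≤ L * ‖x - y‖)
    (hbdd : BddBelow (f '' spSet n s))
    (hlam0 : 0 < lam) (hlamL : lam < 1 / L)
    (w : ℕ → EuclideanSpace ℝ (Fin n))
    (hw0 : w 0 ∈ spSet n s)
    (hiter : ∀ k, w (k + 1) ∈ projSet (spSet n s) (w k - lam • f' (w k)))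
    (wstar : EuclideanSpace ℝ (Fin n))
    (haccum : ∃ φ : ℕ → ℕ, StrictMono φ ∧ Tendsto (fun k => w (φ k)) atTop (𝓝 wstar)) :
    wstar ∈ projSet (spSet n s) (wstar - lam • f' wstar) :=
  stmt2_general f f' L lam hL hgrad hlip hbdd hlam0 hlamL w hw0 hiter wstar haccum
end
end

section
/- Let {w^k} be a sequence generated by the projected gradient iteration w^{k+1} ∈ P_{A_s}(w^k − λ∇f(w^k)) with w^0 ∈ A_s, and suppose w^k → w*. Then the objective gap converges at rate o(1/k): lim_{k→∞} k·(f(w^k) − f(w*)) = 0. -/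
/-!
A projected gradient step with `λ L ≤ 1` never increases `f`, so the gap `f (w k) - f w⋆` is
nonnegative and antitone. Since `w k → w⋆`, the support of `w k` eventually contains that of `w⋆`;
then the whole line through `w (k + 1)` and `w⋆` is `s`-sparse, and the nearest-point property
gives the variational inequality `⟪w k - λ ∇f (w k) - w (k + 1), w⋆ - w (k + 1)⟫ ≤ 0` familiar
from convex constraints. With convexity and the descent lemma this yields
`2λ (f (w (k + 1)) - f w⋆) ≤ ‖w k - w⋆‖² - ‖w (k + 1) - w⋆‖²`. Summing from `m` to `k` and using
monotonicity of the gap bounds `(k - m) (f (w k) - f w⋆)` by `‖w m - w⋆‖² / 2λ`, which is small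
for large `m`; taking `k ≥ 2m` gives `k (f (w k) - f w⋆) → 0`.
-/

open Filter Topology

noncomputable section

open Set
open scoped RealInnerProductSpace

section Smooth

variable {E : Type*} [NormedAddCommGroup E] [InnerProductSpace ℝ E] [CompleteSpace E]
  {f : E → ℝ} {f' : E → E}

theorem HasGradientAt.hasDerivAt_comp_add_smul {g x v : E} {t : ℝ}
    (h : HasGradientAt f g (x + t • v)) :
    HasDerivAt (fun t : ℝ => f (x + t • v)) ⟪g, v⟫ t := by
  have hline : HasDerivAt (fun t : ℝ => x + t • v) v t := by
    simpa using ((hasDerivAt_id t).smul_const v).const_add x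
  have hcomp := h.hasFDerivAt.comp_hasDerivAt t hline
  simp only [InnerProductSpace.toDual_apply_apply] at hcomp
  exact hcomp

theorem ConvexOn.add_inner_le_of_hasGradientAt (hf : ConvexOn ℝ univ f) {g x : E}
    (h : HasGradientAt f g x) (y : E) : f x + ⟪g, y - x⟫ ≤ f y := by
  have hline : ConvexOn ℝ univ (fun t : ℝ => f (x + t • (y - x))) := by
    have hcomp := hf.comp_affineMap (AffineMap.lineMap x y)
    have heq : f ∘ AffineMap.lineMap x y = fun t : ℝ => f (x + t • (y - x)) := by
      ext t; simp [AffineMap.lineMap_apply, add_comm]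
    rwa [preimage_univ, heq] at hcomp
  have hderiv := HasGradientAt.hasDerivAt_comp_add_smul (v := y - x) (t := 0) (by simpa using h)
  have hslope := hline.le_slope_of_hasDerivAt (mem_univ 0) (mem_univ 1) one_pos hderiv
  simp only [slope_def_field, one_smul, add_sub_cancel, zero_smul, add_zero, sub_zero, div_one]
    at hslope
  linarith

theorem le_add_inner_add_sq_of_lipschitz_gradient {L : ℝ}
    (hgrad : ∀ x, HasGradientAt f (f' x) x) (hlip : ∀ x y, ‖f' x - f' y‖ ≤ L * ‖x - y‖)
    (x y : E) : f y ≤ f x + ⟪f' x, y - x⟫ + L / 2 * ‖y - x‖ ^ 2 := by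
  set v := y - x
  set B : ℝ → ℝ := fun t => f x + t * ⟪f' x, v⟫ + L / 2 * t ^ 2 * ‖v‖ ^ 2
  have hderiv (t : ℝ) : HasDerivAt (fun t : ℝ => f (x + t • v)) ⟪f' (x + t • v), v⟫ t :=
    (hgrad _).hasDerivAt_comp_add_smul
  have hderivB (t : ℝ) : HasDerivAt B (⟪f' x, v⟫ + L * t * ‖v‖ ^ 2) t := by
    have h := (((hasDerivAt_id t).mul_const ⟪f' x, v⟫).const_add (f x)).add
      (((hasDerivAt_pow 2 t).const_mul (L / 2)).mul_const (‖v‖ ^ 2))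
    exact h.congr_deriv (by simp only [one_mul, Nat.cast_ofNat, Nat.add_one_sub_one, pow_one]; ring)
  have hslope (t : ℝ) (ht : 0 ≤ t) : ⟪f' (x + t • v), v⟫ ≤ ⟪f' x, v⟫ + L * t * ‖v‖ ^ 2 := by
    have hgap : ⟪f' (x + t • v) - f' x, v⟫ ≤ L * t * ‖v‖ ^ 2 :=
      calc ⟪f' (x + t • v) - f' x, v⟫ ≤ ‖f' (x + t • v) - f' x‖ * ‖v‖ := real_inner_le_norm _ _
        _ ≤ L * ‖t • v‖ * ‖v‖ := by
          gcongr
          simpa using hlip (x + t • v) x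
        _ = L * t * ‖v‖ ^ 2 := by rw [norm_smul, Real.norm_of_nonneg ht]; ring
    rw [inner_sub_left] at hgap
    linarith
  have hend : f (x + (1 : ℝ) • v) ≤ B 1 :=
    image_le_of_deriv_right_le_deriv_boundary (a := 0) (b := 1)
      (fun t _ => (hderiv t).continuousAt.continuousWithinAt)
      (fun t _ => (hderiv t).hasDerivWithinAt) (by simp [B])
      (fun t _ => (hderivB t).continuousAt.continuousWithinAt)
      (fun t _ => (hderivB t).hasDerivWithinAt) (fun t ht => hslope t ht.1)
      (right_mem_Icc.2 zero_le_one)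
  simpa [B, v] using hend

end Smooth

section NearestPoint

variable {E : Type*} [NormedAddCommGroup E] [InnerProductSpace ℝ E] {A : Set E} {y z : E}

theorem norm_sub_sq_add_two_mul_inner_nonpos_of_nearest {x g : E} {lam : ℝ}
    (hx : x ∈ A) (hy : ∀ a ∈ A, ‖x - lam • g - y‖ ≤ ‖x - lam • g - a‖) :
    ‖y - x‖ ^ 2 + 2 * lam * ⟪g, y - x⟫ ≤ 0 := by
  have hsq := pow_le_pow_left₀ (norm_nonneg _) (hy x hx) 2
  rw [show x - lam • g - y = -(y - x) - lam • g by abel, show x - lam • g - x = -(lam • g) by abel,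
    norm_neg, norm_sub_sq_real, inner_neg_left, real_inner_smul_right, norm_neg,
    real_inner_comm] at hsq
  linarith

theorem inner_sub_nonpos_of_nearest_of_eventually_mem {u : E}
    (hy : ∀ a ∈ A, ‖z - y‖ ≤ ‖z - a‖) (hray : ∀ᶠ t in 𝓝[>] (0 : ℝ), y + t • (u - y) ∈ A) :
    ⟪z - y, u - y⟫ ≤ 0 := by
  have hsmall : ∀ᶠ t in 𝓝[>] (0 : ℝ), ⟪z - y, u - y⟫ ≤ t / 2 * ‖u - y‖ ^ 2 := by
    filter_upwards [hray, self_mem_nhdsWithin] with t ht (htpos : 0 < t)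
    have hsq := pow_le_pow_left₀ (norm_nonneg _) (hy _ ht) 2
    rw [show z - (y + t • (u - y)) = (z - y) - t • (u - y) by abel, norm_sub_sq_real (z - y),
      real_inner_smul_right, norm_smul, Real.norm_of_nonneg htpos.le, mul_pow] at hsq
    nlinarith
  have hlim : Tendsto (fun t : ℝ => t / 2 * ‖u - y‖ ^ 2) (𝓝[>] 0) (𝓝 0) := by
    have hcont : Continuous fun t : ℝ => t / 2 * ‖u - y‖ ^ 2 := by fun_prop
    simpa using (hcont.tendsto 0).mono_left nhdsWithin_le_nhds
  exact ge_of_tendsto hlim hsmall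

end NearestPoint

theorem tendsto_nat_mul_of_antitone_of_le_sub {a b : ℕ → ℝ} {c : ℝ} (hc : 0 < c)
    (ha : Antitone a) (ha0 : ∀ k, 0 ≤ a k) (hb0 : ∀ k, 0 ≤ b k) (hb : Tendsto b atTop (𝓝 0))
    (hab : ∀ᶠ k in atTop, c * a (k + 1) ≤ b k - b (k + 1)) :
    Tendsto (fun k : ℕ => (k : ℝ) * a k) atTop (𝓝 0) := by
  obtain ⟨K, hK⟩ := eventually_atTop.1 hab
  have htele : ∀ m, K ≤ m → ∀ k, m ≤ k → c * ((k - m : ℝ) * a k) ≤ b m - b k := by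
    intro m hm k hmk
    induction k, hmk using Nat.le_induction with
    | base => simp
    | succ k hmk ih =>
      have hstep := hK k (hm.trans hmk)
      have hmono : (k - m : ℝ) * a (k + 1) ≤ (k - m) * a k :=
        mul_le_mul_of_nonneg_left (ha k.le_succ) (sub_nonneg.2 (by exact_mod_cast hmk))
      push_cast
      nlinarith
  rw [tendsto_order]
  refine ⟨fun ε hε => Eventually.of_forall fun k => hε.trans_le (by positivity [ha0 k]), ?_⟩
  intro ε hε
  have hbsmall : ∀ᶠ m in atTop, b m < c * ε / 2 := hb.eventually (gt_mem_nhds (by positivity))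
  obtain ⟨m, hbm, hmK⟩ := (hbsmall.and (eventually_ge_atTop K)).exists
  filter_upwards [eventually_ge_atTop (2 * m + 1)] with k hk
  have hmk := htele m hmK k (by omega)
  have hkm : (k : ℝ) ≤ 2 * (k - m) := by
    have : (2 * m + 1 : ℝ) ≤ k := by exact_mod_cast hk
    linarith
  have hka := mul_le_mul_of_nonneg_right hkm (ha0 k)
  nlinarith [hb0 k, ha0 k]

section Step

variable {E : Type*} [NormedAddCommGroup E] [InnerProductSpace ℝ E] [CompleteSpace E]
  {f : E → ℝ} {f' : E → E} {L lam : ℝ}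

theorem apply_le_of_nearest_gradient_step {A : Set E} {x y : E}
    (hgrad : ∀ x, HasGradientAt f (f' x) x) (hlip : ∀ x y, ‖f' x - f' y‖ ≤ L * ‖x - y‖)
    (hlam0 : 0 < lam) (hlamL : lam * L ≤ 1) (hx : x ∈ A)
    (hy : ∀ a ∈ A, ‖x - lam • f' x - y‖ ≤ ‖x - lam • f' x - a‖) :
    f y ≤ f x := by
  have hproj := norm_sub_sq_add_two_mul_inner_nonpos_of_nearest hx hy
  have hdesc := le_add_inner_add_sq_of_lipschitz_gradient hgrad hlip x y
  nlinarith [sq_nonneg ‖y - x‖]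

theorem two_mul_sub_le_sq_sub_sq_of_inner_nonpos (hf : ConvexOn ℝ univ f)
    (hgrad : ∀ x, HasGradientAt f (f' x) x) (hlip : ∀ x y, ‖f' x - f' y‖ ≤ L * ‖x - y‖)
    (hlam0 : 0 < lam) (hlamL : lam * L ≤ 1) {x y u : E}
    (hobtuse : ⟪x - lam • f' x - y, u - y⟫ ≤ 0) :
    2 * lam * (f y - f u) ≤ ‖x - u‖ ^ 2 - ‖y - u‖ ^ 2 := by
  have hconv := hf.add_inner_le_of_hasGradientAt (hgrad x) u
  have hdesc := le_add_inner_add_sq_of_lipschitz_gradient hgrad hlip x y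
  have hsplit : ⟪f' x, y - x⟫ = ⟪f' x, y - u⟫ + ⟪f' x, u - x⟫ := by
    rw [← inner_add_right, sub_add_sub_cancel]
  have hpyth : ‖x - u‖ ^ 2 = ‖x - y‖ ^ 2 + ‖y - u‖ ^ 2 + 2 * ⟪x - y, y - u⟫ := by
    rw [add_right_comm, ← norm_add_sq_real, sub_add_sub_cancel]
  rw [show x - lam • f' x - y = (x - y) - lam • f' x by abel, inner_sub_left, real_inner_smul_left,
    show u - y = -(y - u) by abel, inner_neg_right, inner_neg_right] at hobtuse
  rw [norm_sub_rev] at hdesc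
  nlinarith [mul_nonneg (sub_nonneg.2 hlamL) (sq_nonneg ‖x - y‖)]

end Step

theorem eventually_forall_ne_zero_of_tendsto {ι α : Type*} [Finite ι] {l : Filter α}
    {w : α → EuclideanSpace ℝ ι} {u : EuclideanSpace ℝ ι} (h : Tendsto w l (𝓝 u)) :
    ∀ᶠ k in l, ∀ i, u i ≠ 0 → w k i ≠ 0 := by
  rw [eventually_all]
  intro i
  by_cases hi : u i = 0
  · exact Eventually.of_forall fun _ h => absurd hi h
  · filter_upwards [((EuclideanSpace.proj i).continuous.tendsto u |>.comp h).eventually_ne hi]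
      with k hk _
    exact hk

theorem add_smul_sub_mem_spSet {n s : ℕ} {y u : EuclideanSpace ℝ (Fin n)} (hy : y ∈ spSet n s)
    (hsupp : ∀ i, u i ≠ 0 → y i ≠ 0) (t : ℝ) : y + t • (u - y) ∈ spSet n s := by
  refine (Finset.card_le_card fun i => ?_).trans hy
  simp only [Finset.mem_filter, Finset.mem_univ, true_and]
  contrapose!
  intro hyi
  have hui : u i = 0 := by_contra fun h => hsupp i h hyi
  simp [hyi, hui]

theorem stmt7_general {n s : ℕ}
    (f : EuclideanSpace ℝ (Fin n) → ℝ)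
    (f' : EuclideanSpace ℝ (Fin n) → EuclideanSpace ℝ (Fin n))
    (L lam : ℝ) (hL : 0 < L)
    (hconv : ConvexOn ℝ Set.univ f)
    (hgrad : ∀ x, HasGradientAt f (f' x) x)
    (hlip : ∀ x y, ‖f' x - f' y‖ ≤ L * ‖x - y‖)
    (hlam0 : 0 < lam) (hlamL : lam < 1 / L)
    (w : ℕ → EuclideanSpace ℝ (Fin n))
    (hw0 : w 0 ∈ spSet n s)
    (hiter : ∀ k, w (k + 1) ∈ projSet (spSet n s) (w k - lam • f' (w k)))
    (wstar : EuclideanSpace ℝ (Fin n))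
    (hconvg : Tendsto w atTop (𝓝 wstar)) :
    Tendsto (fun k : ℕ => (k : ℝ) * (f (w k) - f wstar)) atTop (𝓝 0) := by
  have hlamL' : lam * L ≤ 1 := ((lt_div_iff₀ hL).1 hlamL).le
  have hmem : ∀ k, w k ∈ spSet n s := by
    rintro (_ | k)
    exacts [hw0, (hiter k).1]
  have hanti : Antitone fun k => f (w k) := antitone_nat_of_succ_le fun k =>
    apply_le_of_nearest_gradient_step hgrad hlip hlam0 hlamL' (hmem k) (hiter k).2
  have hval : Tendsto (fun k => f (w k)) atTop (𝓝 (f wstar)) :=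
    (hgrad wstar).continuousAt.tendsto.comp hconvg
  have hdist : Tendsto (fun k => ‖w k - wstar‖ ^ 2) atTop (𝓝 0) := by
    simpa using ((hconvg.sub_const wstar).norm.pow 2)
  refine tendsto_nat_mul_of_antitone_of_le_sub (c := 2 * lam) (by positivity)
    (fun j k hjk => sub_le_sub_right (hanti hjk) _)
    (fun k => sub_nonneg.2 (hanti.le_of_tendsto hval k)) (fun k => by positivity) hdist ?_
  filter_upwards [eventually_forall_ne_zero_of_tendsto (hconvg.comp (tendsto_add_atTop_nat 1))]
    with k hk
  refine two_mul_sub_le_sq_sub_sq_of_inner_nonpos hconv hgrad hlip hlam0 hlamL' ?_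
  exact inner_sub_nonpos_of_nearest_of_eventually_mem (hiter k).2
    (Eventually.of_forall fun t => add_smul_sub_mem_spSet (hiter k).1 hk t)

/-- if the PG iterates converge, the objective gap is $o(1/k)$. -/
theorem stmt7 {n s : ℕ} (hs1 : 1 ≤ s) (hsn : s ≤ n)
    (f : EuclideanSpace ℝ (Fin n) → ℝ)
    (f' : EuclideanSpace ℝ (Fin n) → EuclideanSpace ℝ (Fin n))
    (L lam : ℝ) (hL : 0 < L)
    (hconv : ConvexOn ℝ Set.univ f)
    (hgrad : ∀ x, HasGradientAt f (f' x) x)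
    (hlip : ∀ x y, ‖f' x - f' y‖ ≤ L * ‖x - y‖)
    (hbdd : BddBelow (f '' spSet n s))
    (hlam0 : 0 < lam) (hlamL : lam < 1 / L)
    (w : ℕ → EuclideanSpace ℝ (Fin n))
    (hw0 : w 0 ∈ spSet n s)
    (hiter : ∀ k, w (k + 1) ∈ projSet (spSet n s) (w k - lam • f' (w k)))
    (wstar : EuclideanSpace ℝ (Fin n))
    (hconvg : Tendsto w atTop (𝓝 wstar)) :
    Tendsto (fun k : ℕ => (k : ℝ) * (f (w k) - f wstar)) atTop (𝓝 0) :=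
  stmt7_general f f' L lam hL hconv hgrad hlip hlam0 hlamL w hw0 hiter wstar hconvg
end
end
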